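/- arXiv:2201.11087 — 7 statements merged into one kernel-verified Lean document; each statement's English description precedes it below -/
import Mathlib

section
/- For every Rényi index γ with 0 < γ ≤ 2, the entropy function η_γ is concave on the unit interval [0,1]. -/
/-- The Rényi entropy function `η_γ : ℝ → ℝ`. It vanishes outside the open unit
interval; for `t ∈ (0,1)` it equals `(1/(1-γ))·ln(t^γ + (1-t)^γ)` when `γ ≠ 1`
and `-t·ln t - (1-t)·ln(1-t)` when `γ = 1`. Powers are real powers. -/
noncomputable def renyiEntropy (γ : ℝ) (t : ℝ) : ℝ :=
  if t ∈ Set.Ioo (0 : ℝ) 1 then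
    if γ = 1 then -t * Real.log t - (1 - t) * Real.log (1 - t)
    else (1 / (1 - γ)) * Real.log (t ^ γ + (1 - t) ^ γ)
  else 0

/-!
For `γ ≠ 1`, on `[0,1]` the function `η_γ` is `(1 - γ)⁻¹ · log g` with
`g t = t ^ γ + (1 - t) ^ γ > 0`, and `(log g)'' = (g'' g - g'²) / g²`.
For `γ < 1` the factor `(1 - γ)⁻¹` is positive and `g'' ≤ 0`.
For `1 < γ ≤ 2` the factor is negative and `g` is log-convex: with `s = γ - 1 ∈ (0, 1]`,
`a = t` and `b = 1 - t`, the inequality `g'² ≤ g'' g` reduces to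
`(a ^ s - b ^ s)² a b ≤ s a ^ s b ^ s (a + b)²`, which follows from the tangent-line bound
for the concave map `x ↦ x ^ s`. For `γ = 1`, `η_1` is the binary Shannon entropy.
-/

open Real Set

noncomputable def powerSum (γ t : ℝ) : ℝ := t ^ γ + (1 - t) ^ γ

lemma powerSum_pos {γ t : ℝ} (hγ : 0 < γ) (ht : t ∈ Icc 0 1) : 0 < powerSum γ t := by
  rcases ht.1.eq_or_lt with rfl | ht0
  · simp [powerSum, zero_rpow hγ.ne']
  · exact add_pos_of_pos_of_nonneg (rpow_pos_of_pos ht0 _) (rpow_nonneg (sub_nonneg.2 ht.2) _)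

lemma continuous_powerSum {γ : ℝ} (hγ : 0 ≤ γ) : Continuous (powerSum γ) :=
  (continuous_rpow_const hγ).add
    ((continuous_rpow_const hγ).comp (continuous_const.sub continuous_id))

lemma hasDerivAt_one_sub_rpow (p : ℝ) {t : ℝ} (ht : t ≠ 1) :
    HasDerivAt (fun x => (1 - x) ^ p) (-(p * (1 - t) ^ (p - 1))) t :=
  (((hasDerivAt_id' t).const_sub 1).rpow_const (Or.inl (sub_ne_zero.2 ht.symm))).congr_deriv
    (by ring)

lemma hasDerivAt_powerSum (γ : ℝ) {t : ℝ} (ht0 : t ≠ 0) (ht1 : t ≠ 1) :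
    HasDerivAt (powerSum γ) (γ * (t ^ (γ - 1) - (1 - t) ^ (γ - 1))) t :=
  ((hasDerivAt_rpow_const (Or.inl ht0)).add (hasDerivAt_one_sub_rpow γ ht1)).congr_deriv
    (by ring)

lemma hasDerivAt_powerSum_deriv (γ : ℝ) {t : ℝ} (ht0 : t ≠ 0) (ht1 : t ≠ 1) :
    HasDerivAt (fun x => γ * (x ^ (γ - 1) - (1 - x) ^ (γ - 1)))
      (γ * (γ - 1) * (t ^ (γ - 2) + (1 - t) ^ (γ - 2))) t := by
  refine (((hasDerivAt_rpow_const (p := γ - 1) (Or.inl ht0)).sub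
    (hasDerivAt_one_sub_rpow (γ - 1) ht1)).const_mul γ).congr_deriv ?_
  rw [show γ - 1 - 1 = γ - 2 by ring]
  ring

lemma rpow_mul_le_rpow_mul_add {s a b : ℝ} (ha : 0 ≤ a) (hb : 0 < b) (hs0 : 0 ≤ s)
    (hs1 : s ≤ 1) :
    a ^ s * b ≤ b ^ s * (s * a + (1 - s) * b) := by
  have hamgm := geom_mean_le_arith_mean2_weighted hs0 (sub_nonneg.2 hs1) ha hb.le
    (add_sub_cancel s 1)
  calc a ^ s * b = a ^ s * b ^ (1 - s) * b ^ s := by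
        rw [mul_assoc, ← rpow_add hb, sub_add_cancel, rpow_one]
    _ ≤ (s * a + (1 - s) * b) * b ^ s := by gcongr
    _ = b ^ s * (s * a + (1 - s) * b) := mul_comm _ _

lemma sq_rpow_sub_rpow_mul_le {s a b : ℝ} (ha : 0 < a) (hb : 0 < b) (hs0 : 0 ≤ s)
    (hs1 : s ≤ 1) :
    (a ^ s - b ^ s) ^ 2 * (a * b) ≤ s * a ^ s * b ^ s * (a + b) ^ 2 := by
  wlog hba : b ≤ a generalizing a b
  · convert this hb ha (le_of_not_ge hba) using 1 <;> ring
  have hBA : 0 ≤ a ^ s - b ^ s := sub_nonneg.2 (rpow_le_rpow hb.le hba hs0)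
  have htangent : (a ^ s - b ^ s) * b ≤ s * b ^ s * (a - b) := by
    nlinarith [rpow_mul_le_rpow_mul_add ha.le hb hs0 hs1]
  have hA : a ^ s - b ^ s ≤ a ^ s := sub_le_self _ (rpow_nonneg hb.le s)
  have hab : a * (a - b) ≤ (a + b) ^ 2 := by nlinarith
  calc (a ^ s - b ^ s) ^ 2 * (a * b) = (a ^ s - b ^ s) * ((a ^ s - b ^ s) * b) * a := by ring
    _ ≤ a ^ s * (s * b ^ s * (a - b)) * a := by gcongr
    _ = s * a ^ s * b ^ s * (a * (a - b)) := by ring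
    _ ≤ s * a ^ s * b ^ s * (a + b) ^ 2 := by gcongr

lemma sq_mul_rpow_sub_rpow_le {γ a b : ℝ} (ha : 0 < a) (hb : 0 < b) (hγ1 : 1 ≤ γ)
    (hγ2 : γ ≤ 2) :
    (γ * (a ^ (γ - 1) - b ^ (γ - 1))) ^ 2 ≤
      γ * (γ - 1) * (a ^ (γ - 2) + b ^ (γ - 2)) * (a ^ γ + b ^ γ) := by
  have hcore := sq_rpow_sub_rpow_mul_le ha hb (sub_nonneg.2 hγ1) (by linarith : γ - 1 ≤ 1)
  have hpow : ∀ x : ℝ, 0 < x →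
      x ^ γ = x ^ (γ - 1) * x ∧ x ^ (γ - 2) = x ^ (γ - 1) / x :=
    fun x hx => ⟨by rw [← rpow_add_one hx.ne', sub_add_cancel],
      by rw [← rpow_sub_one hx.ne', sub_sub, one_add_one_eq_two]⟩
  obtain ⟨ha1, ha2⟩ := hpow a ha
  obtain ⟨hb1, hb2⟩ := hpow b hb
  rw [ha1, ha2, hb1, hb2]
  rw [div_add_div _ _ ha.ne' hb.ne', mul_div_assoc', div_mul_eq_mul_div,
    le_div_iff₀ (by positivity)]
  nlinarith [mul_le_mul_of_nonneg_left hcore (by positivity : 0 ≤ γ)]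

lemma concaveOn_const_mul_log {D : Set ℝ} (hD : Convex ℝ D) {g g' g'' : ℝ → ℝ} (c : ℝ)
    (hg : ContinuousOn g D) (hg0 : ∀ x ∈ D, 0 < g x)
    (hg' : ∀ x ∈ interior D, HasDerivAt g (g' x) x)
    (hg'' : ∀ x ∈ interior D, HasDerivAt g' (g'' x) x)
    (hsign : ∀ x ∈ interior D, c * (g'' x * g x - g' x ^ 2) ≤ 0) :
    ConcaveOn ℝ D (fun x => c * log (g x)) := by
  have hne : ∀ x ∈ interior D, g x ≠ 0 := fun x hx => (hg0 x (interior_subset hx)).ne'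
  refine concaveOn_of_hasDerivWithinAt2_nonpos hD
    (continuousOn_const.mul (hg.log fun x hx => (hg0 x hx).ne'))
    (f' := fun x => c * (g' x / g x))
    (f'' := fun x => c * ((g'' x * g x - g' x * g' x) / g x ^ 2))
    (fun x hx => (((hg' x hx).log (hne x hx)).const_mul c).hasDerivWithinAt)
    (fun x hx => (((hg'' x hx).div (hg' x hx) (hne x hx)).const_mul c).hasDerivWithinAt)
    fun x hx => ?_
  rw [← mul_div_assoc, ← sq]
  exact div_nonpos_of_nonpos_of_nonneg (hsign x hx) (sq_nonneg _)

lemma renyiEntropy_one_eqOn_binEntropy : EqOn (renyiEntropy 1) binEntropy (Icc 0 1) := by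
  rintro t ⟨ht0, ht1⟩
  rcases ht0.eq_or_lt with rfl | ht0
  · simp [renyiEntropy]
  rcases ht1.eq_or_lt with rfl | ht1
  · simp [renyiEntropy]
  rw [renyiEntropy, if_pos ⟨ht0, ht1⟩, if_pos rfl, binEntropy, log_inv, log_inv]
  ring

lemma renyiEntropy_eqOn {γ : ℝ} (hγ0 : 0 < γ) (hγ1 : γ ≠ 1) :
    EqOn (renyiEntropy γ) (fun t => 1 / (1 - γ) * log (powerSum γ t)) (Icc 0 1) := by
  rintro t ⟨ht0, ht1⟩
  rcases ht0.eq_or_lt with rfl | ht0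
  · simp [renyiEntropy, powerSum, zero_rpow hγ0.ne']
  rcases ht1.eq_or_lt with rfl | ht1
  · simp [renyiEntropy, powerSum, zero_rpow hγ0.ne']
  rw [renyiEntropy, if_pos ⟨ht0, ht1⟩, if_neg hγ1]
  rfl

/-- For every Rényi index `γ` with `0 < γ ≤ 2`, the entropy function `η_γ` is
concave on the unit interval `[0,1]`. -/
theorem renyiEntropy_concaveOn {γ : ℝ} (hγ0 : 0 < γ) (hγ2 : γ ≤ 2) :
    ConcaveOn ℝ (Set.Icc (0 : ℝ) 1) (renyiEntropy γ) := by
  rcases eq_or_ne γ 1 with rfl | hγ1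
  · exact strictConcave_binEntropy.concaveOn.congr renyiEntropy_one_eqOn_binEntropy.symm
  refine ConcaveOn.congr ?_ (renyiEntropy_eqOn hγ0 hγ1).symm
  refine concaveOn_const_mul_log (convex_Icc 0 1) _ (continuous_powerSum hγ0.le).continuousOn
    (g' := fun x => γ * (x ^ (γ - 1) - (1 - x) ^ (γ - 1)))
    (g'' := fun x => γ * (γ - 1) * (x ^ (γ - 2) + (1 - x) ^ (γ - 2)))
    (fun t ht => powerSum_pos hγ0 ht) ?_ ?_ ?_ <;> rw [interior_Icc]
  · exact fun t ht => hasDerivAt_powerSum γ ht.1.ne' ht.2.ne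
  · exact fun t ht => hasDerivAt_powerSum_deriv γ ht.1.ne' ht.2.ne
  rintro t ⟨ht0, ht1⟩
  rcases hγ1.lt_or_gt with hlt | hgt
  · have hg'' : γ * (γ - 1) * (t ^ (γ - 2) + (1 - t) ^ (γ - 2)) ≤ 0 :=
      mul_nonpos_of_nonpos_of_nonneg (mul_nonpos_of_nonneg_of_nonpos hγ0.le (by linarith))
        (by positivity)
    refine mul_nonpos_of_nonneg_of_nonpos (by simp only [one_div, inv_nonneg]; linarith) ?_
    exact sub_nonpos.2 ((mul_nonpos_of_nonpos_of_nonneg hg''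
      (powerSum_pos hγ0 ⟨ht0.le, ht1.le⟩).le).trans (sq_nonneg _))
  · refine mul_nonpos_of_nonpos_of_nonneg (by simp only [one_div, inv_nonpos]; linarith) ?_
    exact sub_nonneg.2 (sq_mul_rpow_sub_rpow_le ht0 (sub_pos.2 ht1) hgt.le hγ2)
end

section
/- For every Rényi index γ > 2, the entropy function η_γ is neither concave nor convex on the unit interval [0,1]; i.e., η_γ restricted to [0,1] is not a concave function and not a convex function. -/
open Real Set Filter Topology

theorem rpow_add_mul_rpow_sub_one_le_rpow_add {a b γ : ℝ} (ha : 0 < a) (hab : -a ≤ b)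
    (hγ : 1 ≤ γ) : a ^ γ + γ * a ^ (γ - 1) * b ≤ (a + b) ^ γ := by
  have hba : -1 ≤ b / a := by rw [le_div_iff₀ ha]; linarith
  calc a ^ γ + γ * a ^ (γ - 1) * b = a ^ γ * (1 + γ * (b / a)) := by
        rw [rpow_sub_one ha.ne']; field_simp
    _ ≤ a ^ γ * (1 + b / a) ^ γ := by gcongr; exact one_add_mul_self_le_rpow_one_add hba hγ
    _ = (a + b) ^ γ := by
        rw [← mul_rpow ha.le (by linarith)]
        congr 1; field_simp

theorem ConcaveOn.map_two_mul_le {s : Set ℝ} {f : ℝ → ℝ} {x : ℝ} (hf : ConcaveOn ℝ s f)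
    (h0 : 0 ∈ s) (hx : 2 * x ∈ s) (hf0 : f 0 = 0) : f (2 * x) ≤ 2 * f x := by
  have := hf.2 h0 hx (by norm_num : (0 : ℝ) ≤ 1 / 2) (by norm_num : (0 : ℝ) ≤ 1 / 2)
    (by norm_num)
  simp only [smul_eq_mul, mul_zero, zero_add, hf0] at this
  rw [show 1 / 2 * (2 * x) = x by ring] at this
  linarith

theorem renyiEntropy_of_mem_Ioo {γ t : ℝ} (hγ : γ ≠ 1) (ht : t ∈ Ioo 0 1) :
    renyiEntropy γ t = 1 / (1 - γ) * log (t ^ γ + (1 - t) ^ γ) := by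
  rw [renyiEntropy, if_pos ht, if_neg hγ]

theorem renyiEntropy_of_notMem_Ioo (γ : ℝ) {t : ℝ} (ht : t ∉ Ioo 0 1) : renyiEntropy γ t = 0 := by
  rw [renyiEntropy, if_neg ht]

theorem renyiEntropy_half (γ : ℝ) : renyiEntropy γ (1 / 2) = log 2 := by
  have hmem : (1 / 2 : ℝ) ∈ Ioo 0 1 := by norm_num
  have hsub : (1 - 1 / 2 : ℝ) = 1 / 2 := by norm_num
  by_cases hγ : γ = 1
  · rw [renyiEntropy, if_pos hmem, if_pos hγ, hsub, one_div, log_inv]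
    ring
  · have hsum : (1 / 2 : ℝ) ^ γ + (1 / 2) ^ γ = 2 ^ (1 - γ) := by
      rw [rpow_sub two_pos, rpow_one, one_div, inv_rpow zero_le_two]
      ring
    rw [renyiEntropy_of_mem_Ioo hγ hmem, hsub, hsum, log_rpow two_pos]
    field_simp [sub_ne_zero.2 (Ne.symm hγ)]

theorem not_convexOn_renyiEntropy (γ : ℝ) : ¬ ConvexOn ℝ (Icc 0 1) (renyiEntropy γ) := by
  intro h
  have := h.le_on_segment (left_mem_Icc.2 zero_le_one) (right_mem_Icc.2 zero_le_one)
    (by rw [segment_eq_Icc zero_le_one]; norm_num : (1 / 2 : ℝ) ∈ segment ℝ 0 1)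
  rw [renyiEntropy_half, renyiEntropy_of_notMem_Ioo γ (by simp),
    renyiEntropy_of_notMem_Ioo γ (by simp), max_self] at this
  exact (log_pos one_lt_two).not_ge this

theorem eventually_two_mul_rpow_lt {γ : ℝ} (hγ : 2 < γ) :
    ∀ᶠ t in 𝓝[>] (0 : ℝ), (2 * t) ^ γ < γ * (1 - 2 * t) ^ (γ - 1) * t ^ 2 := by
  have hsmall : Tendsto (fun t : ℝ => 2 ^ γ * t ^ (γ - 2)) (𝓝 0) (𝓝 0) := by
    have := ((continuous_rpow_const (by linarith : (0 : ℝ) ≤ γ - 2)).const_mul (2 ^ γ)).tendsto 0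
    rwa [zero_rpow (by linarith), mul_zero] at this
  have hpos : Tendsto (fun t : ℝ => γ * (1 - 2 * t) ^ (γ - 1)) (𝓝 0) (𝓝 γ) := by
    have hc : Continuous (fun t : ℝ => γ * (1 - 2 * t) ^ (γ - 1)) :=
      continuous_const.mul ((continuous_rpow_const (by linarith)).comp (by fun_prop))
    simpa using hc.tendsto 0
  filter_upwards [nhdsWithin_le_nhds (hsmall.eventually_lt hpos (by linarith)),
    self_mem_nhdsWithin] with t ht (ht0 : 0 < t)
  calc (2 * t) ^ γ = 2 ^ γ * t ^ (γ - 2) * t ^ 2 := by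
        rw [mul_rpow zero_le_two ht0.le, mul_assoc, ← rpow_natCast, ← rpow_add ht0]
        norm_num
    _ < γ * (1 - 2 * t) ^ (γ - 1) * t ^ 2 := by gcongr

theorem eventually_rpow_add_rpow_lt_sq {γ : ℝ} (hγ : 2 < γ) :
    ∀ᶠ t in 𝓝[>] (0 : ℝ), (2 * t) ^ γ + (1 - 2 * t) ^ γ < (t ^ γ + (1 - t) ^ γ) ^ 2 := by
  filter_upwards [eventually_two_mul_rpow_lt hγ, Ioo_mem_nhdsGT (by norm_num : (0 : ℝ) < 1 / 2)]
    with t hlt ⟨ht0, ht⟩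
  have h1t : 0 ≤ 1 - t := by linarith
  calc (2 * t) ^ γ + (1 - 2 * t) ^ γ < (1 - 2 * t) ^ γ + γ * (1 - 2 * t) ^ (γ - 1) * t ^ 2 := by
        linarith
    _ ≤ (1 - 2 * t + t ^ 2) ^ γ :=
        rpow_add_mul_rpow_sub_one_le_rpow_add (by linarith) (by nlinarith) (by linarith)
    _ = ((1 - t) ^ γ) ^ 2 := by rw [rpow_pow_comm h1t]; ring_nf
    _ ≤ (t ^ γ + (1 - t) ^ γ) ^ 2 := by
        gcongr
        exact le_add_of_nonneg_left (rpow_nonneg ht0.le γ)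

theorem eventually_two_mul_renyiEntropy_lt {γ : ℝ} (hγ : 2 < γ) :
    ∀ᶠ t in 𝓝[>] (0 : ℝ), 2 * renyiEntropy γ t < renyiEntropy γ (2 * t) := by
  filter_upwards [eventually_rpow_add_rpow_lt_sq hγ, Ioo_mem_nhdsGT (by norm_num : (0 : ℝ) < 1 / 2)]
    with t hlt ⟨ht0, ht⟩
  have hγ1 : γ ≠ 1 := by linarith
  rw [renyiEntropy_of_mem_Ioo hγ1 ⟨ht0, by linarith⟩,
    renyiEntropy_of_mem_Ioo hγ1 ⟨by linarith, by linarith⟩]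
  have hlog : log ((2 * t) ^ γ + (1 - 2 * t) ^ γ) < 2 * log (t ^ γ + (1 - t) ^ γ) := by
    have hpos : 0 < (2 * t) ^ γ + (1 - 2 * t) ^ γ :=
      add_pos_of_pos_of_nonneg (by positivity) (rpow_nonneg (by linarith) γ)
    simpa only [log_pow, Nat.cast_ofNat] using log_lt_log hpos hlt
  have hneg : 1 / (1 - γ) < 0 := by rw [one_div_neg]; linarith
  linarith [mul_lt_mul_of_neg_left hlog hneg]

theorem not_concaveOn_renyiEntropy {γ : ℝ} (hγ : 2 < γ) :
    ¬ ConcaveOn ℝ (Icc 0 1) (renyiEntropy γ) := by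
  intro h
  obtain ⟨t, hlt, ht0, ht⟩ := ((eventually_two_mul_renyiEntropy_lt hγ).and
    (Ioo_mem_nhdsGT (by norm_num : (0 : ℝ) < 1 / 2))).exists
  have := h.map_two_mul_le (left_mem_Icc.2 zero_le_one) ⟨by linarith, by linarith⟩
    (renyiEntropy_of_notMem_Ioo γ (by simp))
  linarith

/-- For every Rényi index `γ > 2`, the entropy function `η_γ` is neither concave
nor convex on the unit interval `[0,1]`. -/
theorem renyiEntropy_not_concaveOn_not_convexOn {γ : ℝ} (hγ : 2 < γ) :
    ¬ ConcaveOn ℝ (Set.Icc (0 : ℝ) 1) (renyiEntropy γ) ∧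
      ¬ ConvexOn ℝ (Set.Icc (0 : ℝ) 1) (renyiEntropy γ) :=
  ⟨not_concaveOn_renyiEntropy hγ, not_convexOn_renyiEntropy γ⟩
end

section
/- For every p ∈ (0,1) and every t ∈ [0,1], the inequality (t(1−t))^{1−p} · (t^{2p} + (1−t)^{2p}) ≤ 2t(1−t) + p holds, where all powers are real powers (rpow). -/
/-! Write `s = 1 - t`. Then `(ts)^(1-p) t^(2p) = (t²)^p (ts)^(1-p)` is a weighted geometric mean of
`t²` and `ts`, so by weighted AM–GM it is at most `p t² + (1-p) ts`; symmetrically for `s`.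
Since `t² + s² = 1 - 2ts`, the two bounds add up to `2ts + p - 4pts`. -/

open Real

theorem mul_rpow_one_sub_mul_rpow_two_mul_le {a b p : ℝ} (ha : 0 ≤ a) (hb : 0 ≤ b)
    (hp₀ : 0 ≤ p) (hp₁ : p ≤ 1) :
    (a * b) ^ (1 - p) * a ^ (2 * p) ≤ p * a ^ 2 + (1 - p) * (a * b) :=
  calc (a * b) ^ (1 - p) * a ^ (2 * p) = (a ^ 2) ^ p * (a * b) ^ (1 - p) := by
        rw [rpow_mul ha, rpow_two, mul_comm]
    _ ≤ p * a ^ 2 + (1 - p) * (a * b) :=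
        geom_mean_le_arith_mean2_weighted hp₀ (sub_nonneg.2 hp₁) (sq_nonneg a) (mul_nonneg ha hb)
          (by ring)

/-- For every `p ∈ (0,1)` and `t ∈ [0,1]`:
`(t(1−t))^{1−p} · (t^{2p} + (1−t)^{2p}) ≤ 2t(1−t) + p`, with real powers. -/
theorem rpow_young_inequality {p t : ℝ} (hp : p ∈ Set.Ioo (0 : ℝ) 1)
    (ht : t ∈ Set.Icc (0 : ℝ) 1) :
    (t * (1 - t)) ^ (1 - p) * (t ^ (2 * p) + (1 - t) ^ (2 * p)) ≤ 2 * t * (1 - t) + p := by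
  obtain ⟨hp₀, hp₁⟩ := hp
  obtain ⟨ht₀, ht₁⟩ := ht
  have hs₀ : 0 ≤ 1 - t := sub_nonneg.2 ht₁
  calc (t * (1 - t)) ^ (1 - p) * (t ^ (2 * p) + (1 - t) ^ (2 * p))
      = (t * (1 - t)) ^ (1 - p) * t ^ (2 * p) + ((1 - t) * t) ^ (1 - p) * (1 - t) ^ (2 * p) := by
        rw [mul_comm (1 - t) t, mul_add]
    _ ≤ (p * t ^ 2 + (1 - p) * (t * (1 - t))) + (p * (1 - t) ^ 2 + (1 - p) * ((1 - t) * t)) :=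
        add_le_add (mul_rpow_one_sub_mul_rpow_two_mul_le ht₀ hs₀ hp₀.le hp₁.le)
          (mul_rpow_one_sub_mul_rpow_two_mul_le hs₀ ht₀ hp₀.le hp₁.le)
    _ = 2 * t * (1 - t) + p - 4 * p * t * (1 - t) := by ring
    _ ≤ 2 * t * (1 - t) + p := sub_le_self _ (by positivity)
end

section
/- Let u, v ∈ ℝ and let f : ℝ → ℝ be Hölder continuous on the interval [min(u,v), max(u,v)], i.e., there exist constants C ≥ 0 and δ ∈ (0,1] with |f(x) − f(y)| ≤ C·|x − y|^δ for all x, y in that interval. Then the function t ↦ (f(t·u + (1−t)·v) − t·f(u) − (1−t)·f(v)) / (t(1−t)) is integrable on (0,1). If moreover f is concave on [min(u,v), max(u,v)], then U(u,v;f) = ∫₀¹ (f(t·u + (1−t)·v) − t·f(u) − (1−t)·f(v)) / (t(1−t)) dt ≥ 0. -/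
/-!
A Hölder modulus of order `δ` bounds the gap between `f` and its secant at `t u + (1 - t) v`
by `C |u - v|^δ (t (1 - t)^δ + (1 - t) t^δ)`. After division by `t (1 - t)` this leaves
`(1 - t)^(δ - 1) + t^(δ - 1)`, integrable on `(0, 1)` because `δ > 0`; the Hölder bound also
gives continuity, hence measurability. Concavity makes the gap itself nonnegative.
-/

open MeasureTheory Set
open scoped Interval

protected theorem HolderOnWith.of_dist_le' {X Y : Type*} [PseudoMetricSpace X]
    [PseudoMetricSpace Y] {f : X → Y} {s : Set X} {C δ : ℝ} (hδ : 0 ≤ δ)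
    (h : ∀ x ∈ s, ∀ y ∈ s, dist (f x) (f y) ≤ C * dist x y ^ δ) :
    HolderOnWith C.toNNReal δ.toNNReal f s := by
  intro x hx y hy
  calc edist (f x) (f y) = ENNReal.ofReal (dist (f x) (f y)) := edist_dist _ _
    _ ≤ ENNReal.ofReal (C.toNNReal * dist x y ^ δ) :=
        ENNReal.ofReal_le_ofReal <| (h x hx y hy).trans <| by gcongr; apply Real.le_coe_toNNReal
    _ = C.toNNReal * edist x y ^ (δ.toNNReal : ℝ) := by
        rw [ENNReal.ofReal_mul C.toNNReal.coe_nonneg, ENNReal.ofReal_coe_nnreal,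
          ← ENNReal.ofReal_rpow_of_nonneg dist_nonneg hδ, Real.coe_toNNReal δ hδ, edist_dist]

theorem integrableOn_Ioo_one_sub_rpow_add_rpow {r : ℝ} (hr : -1 < r) :
    IntegrableOn (fun t : ℝ => (1 - t) ^ r + t ^ r) (Ioo 0 1) := by
  have hrpow : IntegrableOn (fun t : ℝ => t ^ r) (Ioo 0 1) :=
    (intervalIntegral.integrableOn_Ioo_rpow_iff one_pos).2 hr
  have hreflected : IntegrableOn (fun t : ℝ => (1 - t) ^ r) (Ioo 0 1) := by
    rw [← intervalIntegrable_iff_integrableOn_Ioo_of_le zero_le_one]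
    simpa using
      ((intervalIntegral.intervalIntegrable_rpow' (a := 0) (b := 1) hr).comp_sub_left 1).symm
  exact hreflected.add hrpow

theorem mul_add_one_sub_mul_mem_uIcc {u v t : ℝ} (ht : t ∈ Icc (0 : ℝ) 1) :
    t * u + (1 - t) * v ∈ [[u, v]] := by
  simpa using convex_uIcc u v left_mem_uIcc right_mem_uIcc ht.1 (sub_nonneg.2 ht.2)
    (add_sub_cancel t 1)

/-- The integrand of the Widom functional `U(u, v; f)`. -/
noncomputable def widomIntegrand (f : ℝ → ℝ) (u v t : ℝ) : ℝ :=
  (f (t * u + (1 - t) * v) - (t * f u + (1 - t) * f v)) / (t * (1 - t))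

section Widom

variable {f : ℝ → ℝ} {u v C δ : ℝ}

theorem abs_sub_secant_le_of_holder
    (hf : ∀ x ∈ [[u, v]], ∀ y ∈ [[u, v]], |f x - f y| ≤ C * |x - y| ^ δ) {t : ℝ}
    (ht : t ∈ Icc (0 : ℝ) 1) :
    |f (t * u + (1 - t) * v) - (t * f u + (1 - t) * f v)| ≤
      C * |u - v| ^ δ * (t * (1 - t) ^ δ + (1 - t) * t ^ δ) := by
  obtain ⟨ht0, ht1⟩ := ht
  have ht1' : 0 ≤ 1 - t := sub_nonneg.2 ht1
  set x := t * u + (1 - t) * v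
  have hx : x ∈ [[u, v]] := mul_add_one_sub_mul_mem_uIcc ⟨ht0, ht1⟩
  have hxu : |f x - f u| ≤ C * ((1 - t) ^ δ * |u - v| ^ δ) := by
    have hdist : |x - u| = (1 - t) * |u - v| := by
      rw [show x - u = (1 - t) * (v - u) by ring, abs_mul, abs_of_nonneg ht1', abs_sub_comm]
    simpa [hdist, Real.mul_rpow ht1' (abs_nonneg _)] using hf x hx u left_mem_uIcc
  have hxv : |f x - f v| ≤ C * (t ^ δ * |u - v| ^ δ) := by
    have hdist : |x - v| = t * |u - v| := by
      rw [show x - v = t * (u - v) by ring, abs_mul, abs_of_nonneg ht0]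
    simpa [hdist, Real.mul_rpow ht0 (abs_nonneg _)] using hf x hx v right_mem_uIcc
  calc |f x - (t * f u + (1 - t) * f v)|
      = |t * (f x - f u) + (1 - t) * (f x - f v)| := by ring_nf
    _ ≤ t * |f x - f u| + (1 - t) * |f x - f v| := by
        refine (abs_add_le _ _).trans_eq ?_
        rw [abs_mul, abs_mul, abs_of_nonneg ht0, abs_of_nonneg ht1']
    _ ≤ t * (C * ((1 - t) ^ δ * |u - v| ^ δ)) + (1 - t) * (C * (t ^ δ * |u - v| ^ δ)) := by
        gcongr
    _ = C * |u - v| ^ δ * (t * (1 - t) ^ δ + (1 - t) * t ^ δ) := by ring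

theorem abs_widomIntegrand_le_of_holder
    (hf : ∀ x ∈ [[u, v]], ∀ y ∈ [[u, v]], |f x - f y| ≤ C * |x - y| ^ δ) {t : ℝ}
    (ht : t ∈ Ioo (0 : ℝ) 1) :
    |widomIntegrand f u v t| ≤ C * |u - v| ^ δ * ((1 - t) ^ (δ - 1) + t ^ (δ - 1)) := by
  obtain ⟨ht0, ht1⟩ := ht
  have ht1' : 0 < 1 - t := sub_pos.2 ht1
  have hden : 0 < t * (1 - t) := mul_pos ht0 ht1'
  have hsplit : t * (1 - t) ^ δ + (1 - t) * t ^ δ =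
      ((1 - t) ^ (δ - 1) + t ^ (δ - 1)) * (t * (1 - t)) := by
    rw [Real.rpow_sub ht1', Real.rpow_sub ht0, Real.rpow_one, Real.rpow_one]
    field_simp
  rw [widomIntegrand, abs_div, abs_of_pos hden, div_le_iff₀ hden, mul_assoc, ← hsplit]
  exact abs_sub_secant_le_of_holder hf ⟨ht0.le, ht1.le⟩

theorem continuousOn_widomIntegrand (hf : ContinuousOn f [[u, v]]) :
    ContinuousOn (widomIntegrand f u v) (Ioo 0 1) := by
  refine ContinuousOn.div ?_ (by fun_prop) fun t ht => (mul_pos ht.1 (sub_pos.2 ht.2)).ne'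
  refine ContinuousOn.sub ?_ (by fun_prop)
  exact hf.comp (by fun_prop) fun t ht => mul_add_one_sub_mul_mem_uIcc (Ioo_subset_Icc_self ht)

theorem integrableOn_widomIntegrand_of_holder (hδ : 0 < δ)
    (hf : ∀ x ∈ [[u, v]], ∀ y ∈ [[u, v]], |f x - f y| ≤ C * |x - y| ^ δ) :
    IntegrableOn (widomIntegrand f u v) (Ioo 0 1) := by
  have hcont : ContinuousOn f [[u, v]] :=
    (HolderOnWith.of_dist_le' hδ.le hf).continuousOn (Real.toNNReal_pos.2 hδ)
  have hdom := (integrableOn_Ioo_one_sub_rpow_add_rpow (r := δ - 1) (by linarith)).const_mul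
    (C * |u - v| ^ δ)
  refine hdom.mono' ((continuousOn_widomIntegrand hcont).aestronglyMeasurable measurableSet_Ioo) ?_
  filter_upwards [ae_restrict_mem measurableSet_Ioo] with t ht
  exact abs_widomIntegrand_le_of_holder hf ht

theorem widomIntegrand_nonneg_of_concaveOn {s : Set ℝ} (hf : ConcaveOn ℝ s f) (hu : u ∈ s)
    (hv : v ∈ s) {t : ℝ} (ht : t ∈ Icc (0 : ℝ) 1) : 0 ≤ widomIntegrand f u v t := by
  have hsecant := hf.2 hu hv ht.1 (sub_nonneg.2 ht.2) (add_sub_cancel t 1)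
  simp only [smul_eq_mul] at hsecant
  exact div_nonneg (sub_nonneg.2 hsecant) (mul_nonneg ht.1 (sub_nonneg.2 ht.2))

end Widom

theorem widom_functional_integrable_and_nonneg_general (u v : ℝ) (f : ℝ → ℝ) (C δ : ℝ)
    (hδ : δ ∈ Set.Ioc (0 : ℝ) 1)
    (hHolder : ∀ x ∈ Set.Icc (min u v) (max u v), ∀ y ∈ Set.Icc (min u v) (max u v),
      |f x - f y| ≤ C * |x - y| ^ δ) :
    MeasureTheory.IntegrableOn
      (fun t : ℝ => (f (t * u + (1 - t) * v) - (t * f u + (1 - t) * f v)) / (t * (1 - t)))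
      (Set.Ioo 0 1) ∧
    (ConcaveOn ℝ (Set.Icc (min u v) (max u v)) f →
      0 ≤ ∫ t in Set.Ioo (0 : ℝ) 1,
        (f (t * u + (1 - t) * v) - (t * f u + (1 - t) * f v)) / (t * (1 - t))) :=
  ⟨integrableOn_widomIntegrand_of_holder hδ.1 hHolder, fun hconc =>
    setIntegral_nonneg measurableSet_Ioo fun _t ht =>
      widomIntegrand_nonneg_of_concaveOn hconc left_mem_uIcc right_mem_uIcc
        (Ioo_subset_Icc_self ht)⟩

/-- Let `f : ℝ → ℝ` be Hölder continuous on `[min u v, max u v]` (with exponent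
`δ ∈ (0,1]` and constant `C ≥ 0`). Then the integrand of the Widom functional
`U(u,v;f)` is integrable on `(0,1)`, and if moreover `f` is concave on
`[min u v, max u v]`, then `U(u,v;f) ≥ 0`. -/
theorem widom_functional_integrable_and_nonneg (u v : ℝ) (f : ℝ → ℝ) (C δ : ℝ)
    (hC : 0 ≤ C) (hδ : δ ∈ Set.Ioc (0 : ℝ) 1)
    (hHolder : ∀ x ∈ Set.Icc (min u v) (max u v), ∀ y ∈ Set.Icc (min u v) (max u v),
      |f x - f y| ≤ C * |x - y| ^ δ) :
    MeasureTheory.IntegrableOn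
      (fun t : ℝ => (f (t * u + (1 - t) * v) - (t * f u + (1 - t) * f v)) / (t * (1 - t)))
      (Set.Ioo 0 1) ∧
    (ConcaveOn ℝ (Set.Icc (min u v) (max u v)) f →
      0 ≤ ∫ t in Set.Ioo (0 : ℝ) 1,
        (f (t * u + (1 - t) * v) - (t * f u + (1 - t) * f v)) / (t * (1 - t))) :=
  widom_functional_integrable_and_nonneg_general u v f C δ hδ hHolder
end

section
/- For all real numbers a > 0 and b > 0, the integral identity U(a,b;ln) = ∫₀¹ (ln(t·a + (1−t)·b) − t·ln(a) − (1−t)·ln(b)) / (t(1−t)) dt = (1/2)·(ln(a) − ln(b))² holds. -/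
/-!
Write the integrand as an integral in a second variable: for `0 < t < 1`,
`(log(ta + (1-t)b) - t log a - (1-t) log b) / (t(1-t)) = ∫_b^a (x - b) / (x (tx + (1-t)b)) dx`,
since `(log(tx + (1-t)b) - t log x) / (t(1-t))` is a primitive in `x` of the kernel. The kernel is
continuous on `[0,1] × [b,a]`, so Fubini applies; in `t` it has primitive `log(tx + (1-t)b) / x`,
which leaves `∫_b^a (log x - log b) / x dx = (log a - log b)² / 2`.
-/

open MeasureTheory Set Real
open scoped Interval

theorem intervalIntegral_integral_swap_of_continuousOn {E : Type*} [NormedAddCommGroup E]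
    [NormedSpace ℝ E] {f : ℝ → ℝ → E} {a b c d : ℝ}
    (hf : ContinuousOn (Function.uncurry f) ([[a, b]] ×ˢ [[c, d]])) :
    ∫ x in a..b, ∫ y in c..d, f x y = ∫ y in c..d, ∫ x in a..b, f x y := by
  have hint : Integrable (Function.uncurry f)
      ((volume.restrict (Ι a b)).prod (volume.restrict (Ι c d))) := by
    rw [Measure.prod_restrict, ← Measure.volume_eq_prod]
    exact (hf.integrableOn_compact (isCompact_uIcc.prod isCompact_uIcc)).mono_set
      (prod_mono uIoc_subset_uIcc uIoc_subset_uIcc)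
  simp only [intervalIntegral.intervalIntegral_eq_integral_uIoc, integral_smul,
    integral_integral_swap hint]
  exact smul_comm _ _ _

lemma mul_add_one_sub_mul_pos {t x b : ℝ} (ht : t ∈ Icc (0 : ℝ) 1) (hx : 0 < x) (hb : 0 < b) :
    0 < t * x + (1 - t) * b :=
  convex_Ioi (0 : ℝ) hx hb ht.1 (sub_nonneg.2 ht.2) (by ring)

lemma pos_of_mem_uIcc {a b x : ℝ} (ha : 0 < a) (hb : 0 < b) (hx : x ∈ [[b, a]]) : 0 < x :=
  ordConnected_Ioi.uIcc_subset hb ha hx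

noncomputable def widomKernel (b t x : ℝ) : ℝ := (x - b) / (x * (t * x + (1 - t) * b))

lemma continuousOn_widomKernel {b : ℝ} (hb : 0 < b) :
    ContinuousOn (Function.uncurry (widomKernel b)) (Icc 0 1 ×ˢ Ioi 0) := by
  refine ContinuousOn.div (by fun_prop) (by fun_prop) ?_
  rintro ⟨t, x⟩ ⟨ht, hx : 0 < x⟩
  exact (mul_pos hx (mul_add_one_sub_mul_pos ht hx hb)).ne'

lemma integral_widomKernel_dx {a b t : ℝ} (ha : 0 < a) (hb : 0 < b) (ht₀ : 0 < t) (ht₁ : t < 1) :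
    ∫ x in b..a, widomKernel b t x =
      (log (t * a + (1 - t) * b) - (t * log a + (1 - t) * log b)) / (t * (1 - t)) := by
  have ht : t ∈ Icc (0 : ℝ) 1 := ⟨ht₀.le, ht₁.le⟩
  have ht₁' : 1 - t ≠ 0 := sub_ne_zero_of_ne ht₁.ne'
  have hderiv : ∀ x ∈ [[b, a]], HasDerivAt
      (fun x => (log (t * x + (1 - t) * b) - t * log x) / (t * (1 - t))) (widomKernel b t x) x := by
    intro x hx
    have hx : 0 < x := pos_of_mem_uIcc ha hb hx
    have hS := mul_add_one_sub_mul_pos ht hx hb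
    refine ((((hasDerivAt_id x).const_mul t).add_const ((1 - t) * b)).log hS.ne' |>.sub
      ((hasDerivAt_log hx.ne').const_mul t)).div_const (t * (1 - t)) |>.congr_deriv ?_
    simp only [widomKernel, id]
    field_simp
    ring
  have hcont : ContinuousOn (widomKernel b t) [[b, a]] :=
    (continuousOn_widomKernel hb).comp (continuousOn_const.prodMk continuousOn_id)
      fun x hx => ⟨ht, pos_of_mem_uIcc ha hb hx⟩
  rw [intervalIntegral.integral_eq_sub_of_hasDerivAt hderiv hcont.intervalIntegrable,
    show t * b + (1 - t) * b = b by ring]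
  field_simp
  ring

lemma integral_widomKernel_dt {b x : ℝ} (hb : 0 < b) (hx : 0 < x) :
    ∫ t in (0 : ℝ)..1, widomKernel b t x = (log x - log b) / x := by
  have hderiv : ∀ t ∈ [[(0 : ℝ), 1]], HasDerivAt
      (fun t => log (t * x + (1 - t) * b) / x) (widomKernel b t x) t := by
    intro t ht
    rw [uIcc_of_le zero_le_one] at ht
    have hS := mul_add_one_sub_mul_pos ht hx hb
    refine ((((hasDerivAt_id t).mul_const x).add
      (((hasDerivAt_id t).const_sub 1).mul_const b)).log hS.ne').div_const x |>.congr_deriv ?_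
    simp only [widomKernel, id, Pi.add_apply]
    field_simp
    ring
  have hcont : ContinuousOn (fun t => widomKernel b t x) [[(0 : ℝ), 1]] :=
    (continuousOn_widomKernel hb).comp (continuousOn_id.prodMk continuousOn_const)
      fun t ht => ⟨by rwa [uIcc_of_le zero_le_one] at ht, hx⟩
  rw [intervalIntegral.integral_eq_sub_of_hasDerivAt hderiv hcont.intervalIntegrable]
  simp only [one_mul, sub_self, zero_mul, add_zero, zero_add, sub_zero]
  ring

lemma integral_log_sub_log_div_self {a b : ℝ} (ha : 0 < a) (hb : 0 < b) :
    ∫ x in b..a, (log x - log b) / x = (1 / 2) * (log a - log b) ^ 2 := by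
  have hderiv : ∀ x ∈ [[b, a]],
      HasDerivAt (fun x => (1 / 2) * (log x - log b) ^ 2) ((log x - log b) / x) x := by
    intro x hx
    refine (((hasDerivAt_log (pos_of_mem_uIcc ha hb hx).ne').sub_const (log b)).pow 2).const_mul
      (1 / 2 : ℝ) |>.congr_deriv ?_
    field_simp
    ring
  have hcont : ContinuousOn (fun x => (log x - log b) / x) [[b, a]] :=
    ContinuousOn.div ((continuousOn_log.mono fun x hx => (pos_of_mem_uIcc ha hb hx).ne').sub
      continuousOn_const) continuousOn_id fun x hx => (pos_of_mem_uIcc ha hb hx).ne'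
  rw [intervalIntegral.integral_eq_sub_of_hasDerivAt hderiv hcont.intervalIntegrable]
  simp

/-- For `a, b > 0` the Widom functional of the logarithm evaluates explicitly:
`U(a,b;ln) = ∫₀¹ (ln(t·a+(1−t)·b) − t·ln a − (1−t)·ln b)/(t(1−t)) dt
           = (1/2)·(ln a − ln b)²`. -/
theorem widom_functional_log (a b : ℝ) (ha : 0 < a) (hb : 0 < b) :
    ∫ t in Set.Ioo (0 : ℝ) 1,
        (Real.log (t * a + (1 - t) * b) - (t * Real.log a + (1 - t) * Real.log b))
          / (t * (1 - t))
      = (1 / 2) * (Real.log a - Real.log b) ^ 2 := by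
  calc _ = ∫ t in Ioo (0 : ℝ) 1, ∫ x in b..a, widomKernel b t x :=
        setIntegral_congr_fun measurableSet_Ioo fun t ht =>
          (integral_widomKernel_dx ha hb ht.1 ht.2).symm
    _ = ∫ t in (0 : ℝ)..1, ∫ x in b..a, widomKernel b t x := by
        rw [intervalIntegral.integral_of_le zero_le_one, integral_Ioc_eq_integral_Ioo]
    _ = ∫ x in b..a, ∫ t in (0 : ℝ)..1, widomKernel b t x :=
        intervalIntegral_integral_swap_of_continuousOn <| (continuousOn_widomKernel hb).mono <|
          prod_mono (uIcc_of_le zero_le_one).subset fun x hx => pos_of_mem_uIcc ha hb hx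
    _ = ∫ x in b..a, (log x - log b) / x :=
        intervalIntegral.integral_congr fun x hx =>
          integral_widomKernel_dt hb (pos_of_mem_uIcc ha hb hx)
    _ = _ := integral_log_sub_log_div_self ha hb
end

section
/- Let 0 < γ < 1 and define F : (0,1) → ℝ by F(t) = η_γ(t) − t^γ/(1−γ). Then for each k ∈ {0,1,2}, the limit lim_{t→0⁺} t^{k−γ} · F^{(k)}(t) = 0 holds, where F^{(k)} denotes the k-th derivative of F. -/
/-!
On `(0,1)`, `F = η_γ - t^γ/(1-γ)` equals `(log g - t^γ)/(1-γ)` with `g(t) = t^γ + (1-t)^γ`.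
For `k = 0`, the bounds `t^γ - t ≤ g - 1 ≤ t^γ` and `1 - 1/g ≤ log g ≤ g - 1` squeeze
`t^{-γ} log g` to `1`. For `k = 1, 2` the rescaled derivatives `t^{1-γ} g'` and `t^{2-γ} g''`
tend to `γ` and `γ(γ-1)`, exactly the contributions of the subtracted `t^γ/(1-γ)`, while the
remaining term `t^{2-γ} (g'/g)^2 = t^γ (t^{1-γ} g'/g)^2` tends to `0`.
-/

open Real Filter Set Topology

namespace RenyiEntropy

variable {γ t : ℝ}

noncomputable def powSum (γ t : ℝ) : ℝ := t ^ γ + (1 - t) ^ γ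

noncomputable def powSumDeriv (γ t : ℝ) : ℝ := γ * t ^ (γ - 1) - γ * (1 - t) ^ (γ - 1)

noncomputable def powSumDeriv2 (γ t : ℝ) : ℝ :=
  γ * (γ - 1) * (t ^ (γ - 2) + (1 - t) ^ (γ - 2))

noncomputable def remainder (γ t : ℝ) : ℝ := renyiEntropy γ t - t ^ γ / (1 - γ)

noncomputable def remainderDeriv (γ t : ℝ) : ℝ :=
  (powSumDeriv γ t / powSum γ t - γ * t ^ (γ - 1)) / (1 - γ)

noncomputable def remainderDeriv2 (γ t : ℝ) : ℝ :=
  (powSumDeriv2 γ t / powSum γ t - (powSumDeriv γ t / powSum γ t) ^ 2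
    - γ * (γ - 1) * t ^ (γ - 2)) / (1 - γ)

lemma rpow_mul_rpow_of_add_eq_zero {a : ℝ} (ht : 0 < t) (b : ℝ) (hab : a + b = 0) :
    t ^ a * t ^ b = 1 := by
  rw [← rpow_add ht, hab, rpow_zero]

lemma powSum_pos (ht : t ∈ Ioo (0 : ℝ) 1) : 0 < powSum γ t :=
  add_pos (rpow_pos_of_pos ht.1 _) (rpow_pos_of_pos (sub_pos.2 ht.2) _)

lemma hasDerivAt_one_sub_rpow {p : ℝ} (ht : t < 1) :
    HasDerivAt (fun s : ℝ => (1 - s) ^ p) (-(p * (1 - t) ^ (p - 1))) t := by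
  simpa using ((hasDerivAt_id t).const_sub 1).rpow_const (p := p) (Or.inl (sub_pos.2 ht).ne')

lemma hasDerivAt_powSum (ht : t ∈ Ioo (0 : ℝ) 1) :
    HasDerivAt (powSum γ) (powSumDeriv γ t) t :=
  (hasDerivAt_rpow_const (Or.inl ht.1.ne')).add (hasDerivAt_one_sub_rpow ht.2)

lemma hasDerivAt_powSumDeriv (ht : t ∈ Ioo (0 : ℝ) 1) :
    HasDerivAt (powSumDeriv γ) (powSumDeriv2 γ t) t := by
  have h := ((hasDerivAt_rpow_const (p := γ - 1) (Or.inl ht.1.ne')).const_mul γ).sub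
    ((hasDerivAt_one_sub_rpow (p := γ - 1) ht.2).const_mul γ)
  refine h.congr_deriv ?_
  rw [powSumDeriv2, show γ - 1 - 1 = γ - 2 by ring]
  ring

lemma remainder_eqOn (hγ : γ ≠ 1) :
    EqOn (remainder γ) (fun t => (log (powSum γ t) - t ^ γ) / (1 - γ)) (Ioo 0 1) := by
  intro t ht
  simp only [remainder, renyiEntropy, if_pos ht, if_neg hγ, powSum]
  ring

lemma hasDerivAt_remainder (hγ : γ ≠ 1) (ht : t ∈ Ioo (0 : ℝ) 1) :
    HasDerivAt (remainder γ) (remainderDeriv γ t) t := by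
  have h := (((hasDerivAt_powSum (γ := γ) ht).log (powSum_pos ht).ne').sub
    (hasDerivAt_rpow_const (p := γ) (Or.inl ht.1.ne'))).div_const (1 - γ)
  exact h.congr_of_eventuallyEq
    (eventuallyEq_of_mem (isOpen_Ioo.mem_nhds ht) (remainder_eqOn hγ))

lemma hasDerivAt_remainderDeriv (ht : t ∈ Ioo (0 : ℝ) 1) :
    HasDerivAt (remainderDeriv γ) (remainderDeriv2 γ t) t := by
  have h := (((hasDerivAt_powSumDeriv (γ := γ) ht).div (hasDerivAt_powSum (γ := γ) ht)
    (powSum_pos ht).ne').sub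
    ((hasDerivAt_rpow_const (p := γ - 1) (Or.inl ht.1.ne')).const_mul γ)).div_const (1 - γ)
  refine h.congr_deriv ?_
  rw [remainderDeriv2, show γ - 1 - 1 = γ - 2 by ring]
  field_simp

lemma iteratedDeriv_one_remainder (hγ : γ ≠ 1) (ht : t ∈ Ioo (0 : ℝ) 1) :
    iteratedDeriv 1 (remainder γ) t = remainderDeriv γ t := by
  rw [iteratedDeriv_one, (hasDerivAt_remainder hγ ht).deriv]

lemma iteratedDeriv_two_remainder (hγ : γ ≠ 1) (ht : t ∈ Ioo (0 : ℝ) 1) :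
    iteratedDeriv 2 (remainder γ) t = remainderDeriv2 γ t := by
  have h : deriv (remainder γ) =ᶠ[𝓝 t] remainderDeriv γ :=
    eventuallyEq_of_mem (isOpen_Ioo.mem_nhds ht)
      fun s hs => (hasDerivAt_remainder hγ hs).deriv
  rw [iteratedDeriv_succ, iteratedDeriv_one, h.deriv_eq, (hasDerivAt_remainderDeriv ht).deriv]

lemma tendsto_rpow_mul_one_sub_rpow {p : ℝ} (hp : 0 < p) (q : ℝ) :
    Tendsto (fun t : ℝ => t ^ p * (1 - t) ^ q) (𝓝[>] 0) (𝓝 0) := by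
  have h : ContinuousAt (fun t : ℝ => t ^ p * (1 - t) ^ q) 0 :=
    (continuousAt_id.rpow_const (Or.inr hp.le)).mul
      ((continuousAt_const.sub continuousAt_id).rpow_const (Or.inl (by norm_num)))
  simpa [zero_rpow hp.ne'] using h.tendsto.mono_left nhdsWithin_le_nhds

lemma tendsto_powSum (hγ : 0 < γ) : Tendsto (powSum γ) (𝓝[>] 0) (𝓝 1) := by
  have h : ContinuousAt (powSum γ) 0 :=
    (continuousAt_id.rpow_const (Or.inr hγ.le)).add
      ((continuousAt_const.sub continuousAt_id).rpow_const (Or.inl (by norm_num)))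
  simpa [powSum, zero_rpow hγ.ne'] using h.tendsto.mono_left nhdsWithin_le_nhds

lemma rpow_sub_self_le_powSum_sub_one (ht : t ∈ Icc (0 : ℝ) 1) (hγ : γ ≤ 1) :
    t ^ γ - t ≤ powSum γ t - 1 := by
  have := self_le_rpow_of_le_one (sub_nonneg.2 ht.2) (by linarith [ht.1]) hγ
  rw [powSum]; linarith

lemma powSum_sub_one_le_rpow (ht : t ∈ Icc (0 : ℝ) 1) (hγ : 0 ≤ γ) :
    powSum γ t - 1 ≤ t ^ γ := by
  have := rpow_le_one (sub_nonneg.2 ht.2) (by linarith [ht.1]) hγ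
  rw [powSum]; linarith

lemma tendsto_rpow_neg_mul_log_powSum (hγ0 : 0 < γ) (hγ1 : γ < 1) :
    Tendsto (fun t => t ^ (-γ) * log (powSum γ t)) (𝓝[>] 0) (𝓝 1) := by
  have hlower : Tendsto (fun t => (1 - t ^ (1 - γ)) / powSum γ t) (𝓝[>] 0) (𝓝 1) := by
    have h := ((tendsto_rpow_mul_one_sub_rpow (sub_pos.2 hγ1) 0).const_sub 1).div
      (tendsto_powSum hγ0) one_ne_zero
    simp only [rpow_zero, mul_one, sub_zero, div_one] at h
    exact h
  have hIoo : Ioo (0 : ℝ) 1 ∈ 𝓝[>] 0 := Ioo_mem_nhdsGT (zero_lt_one' ℝ)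
  refine tendsto_of_tendsto_of_tendsto_of_le_of_le' hlower tendsto_const_nhds ?_ ?_
  · filter_upwards [hIoo] with t ht
    have hpos : 0 < t ^ (-γ) := rpow_pos_of_pos ht.1 _
    have hg := powSum_pos (γ := γ) ht
    calc (1 - t ^ (1 - γ)) / powSum γ t = t ^ (-γ) * ((t ^ γ - t) / powSum γ t) := by
          rw [mul_div_assoc', mul_sub, ← rpow_add ht.1, ← rpow_add_one ht.1.ne']
          ring_nf; simp
      _ ≤ t ^ (-γ) * ((powSum γ t - 1) / powSum γ t) := by
          gcongr t ^ (-γ) * (?_ / _)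
          exact rpow_sub_self_le_powSum_sub_one (Ioo_subset_Icc_self ht) hγ1.le
      _ = t ^ (-γ) * (1 - (powSum γ t)⁻¹) := by field_simp
      _ ≤ t ^ (-γ) * log (powSum γ t) := by gcongr; exact one_sub_inv_le_log_of_pos hg
  · filter_upwards [hIoo] with t ht
    have hpos : 0 < t ^ (-γ) := rpow_pos_of_pos ht.1 _
    calc t ^ (-γ) * log (powSum γ t) ≤ t ^ (-γ) * (powSum γ t - 1) := by
          gcongr; exact log_le_sub_one_of_pos (powSum_pos ht)
      _ ≤ t ^ (-γ) * t ^ γ := by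
          gcongr; exact powSum_sub_one_le_rpow (Ioo_subset_Icc_self ht) hγ0.le
      _ = 1 := rpow_mul_rpow_of_add_eq_zero ht.1 γ (neg_add_cancel γ)

lemma tendsto_rpow_mul_powSumDeriv (hγ : γ < 1) :
    Tendsto (fun t => t ^ (1 - γ) * powSumDeriv γ t) (𝓝[>] 0) (𝓝 γ) := by
  have h := ((tendsto_rpow_mul_one_sub_rpow (sub_pos.2 hγ) (γ - 1)).const_mul γ).const_sub γ
  rw [mul_zero, sub_zero] at h
  refine h.congr' (eventually_mem_nhdsWithin.mono fun t ht => ?_)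
  have h1 := rpow_mul_rpow_of_add_eq_zero ht (γ - 1) (by ring : 1 - γ + (γ - 1) = 0)
  simp only [powSumDeriv]
  linear_combination -γ * h1

lemma tendsto_rpow_mul_powSumDeriv2 (hγ : γ < 2) :
    Tendsto (fun t => t ^ (2 - γ) * powSumDeriv2 γ t) (𝓝[>] 0) (𝓝 (γ * (γ - 1))) := by
  have h := (((tendsto_rpow_mul_one_sub_rpow (sub_pos.2 hγ) (γ - 2)).const_add 1).const_mul
    (γ * (γ - 1)))
  rw [add_zero, mul_one] at h
  refine h.congr' (eventually_mem_nhdsWithin.mono fun t ht => ?_)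
  have h2 := rpow_mul_rpow_of_add_eq_zero ht (γ - 2) (by ring : 2 - γ + (γ - 2) = 0)
  simp only [powSumDeriv2]
  linear_combination -γ * (γ - 1) * h2

lemma tendsto_rpow_neg_mul_remainder (hγ0 : 0 < γ) (hγ1 : γ < 1) :
    Tendsto (fun t => t ^ (-γ) * remainder γ t) (𝓝[>] 0) (𝓝 0) := by
  have h := ((tendsto_rpow_neg_mul_log_powSum hγ0 hγ1).sub_const 1).div_const (1 - γ)
  rw [sub_self, zero_div] at h
  refine h.congr' ?_
  filter_upwards [Ioo_mem_nhdsGT (zero_lt_one' ℝ)] with t ht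
  have h0 := rpow_mul_rpow_of_add_eq_zero ht.1 γ (neg_add_cancel γ)
  rw [remainder_eqOn hγ1.ne ht]
  linear_combination h0 / (1 - γ)

lemma tendsto_rpow_mul_remainderDeriv (hγ0 : 0 < γ) (hγ1 : γ < 1) :
    Tendsto (fun t => t ^ (1 - γ) * remainderDeriv γ t) (𝓝[>] 0) (𝓝 0) := by
  have h := (((tendsto_rpow_mul_powSumDeriv hγ1).div (tendsto_powSum hγ0) one_ne_zero).sub_const
    γ).div_const (1 - γ)
  rw [div_one, sub_self, zero_div] at h
  refine h.congr' (eventually_mem_nhdsWithin.mono fun t ht => ?_)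
  have h1 := rpow_mul_rpow_of_add_eq_zero ht (γ - 1) (by ring : 1 - γ + (γ - 1) = 0)
  simp only [remainderDeriv, Pi.div_apply]
  linear_combination γ / (1 - γ) * h1

lemma tendsto_rpow_mul_remainderDeriv2 (hγ0 : 0 < γ) (hγ1 : γ < 1) :
    Tendsto (fun t => t ^ (2 - γ) * remainderDeriv2 γ t) (𝓝[>] 0) (𝓝 0) := by
  have hN := (tendsto_rpow_mul_powSumDeriv hγ1).div (tendsto_powSum hγ0) one_ne_zero
  have hNp := (tendsto_rpow_mul_powSumDeriv2 (by linarith)).div (tendsto_powSum hγ0) one_ne_zero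
  have h := ((hNp.sub ((tendsto_rpow_mul_one_sub_rpow hγ0 0).mul (hN.pow 2))).sub_const
    (γ * (γ - 1))).div_const (1 - γ)
  simp only [div_one, zero_mul, sub_zero, sub_self, zero_div] at h
  refine h.congr' (eventually_mem_nhdsWithin.mono fun t ht => ?_)
  have h2 := rpow_mul_rpow_of_add_eq_zero ht (γ - 2) (by ring : 2 - γ + (γ - 2) = 0)
  have h3 : t ^ (2 - γ) = t ^ γ * (t ^ (1 - γ)) ^ 2 := by
    rw [sq, ← rpow_add ht, ← rpow_add ht]; ring_nf
  simp only [remainderDeriv2, Pi.div_apply, rpow_zero, mul_one]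
  linear_combination (powSumDeriv γ t / powSum γ t) ^ 2 / (1 - γ) * h3
    + γ * (γ - 1) / (1 - γ) * h2

end RenyiEntropy

open RenyiEntropy

/-- For `0 < γ < 1` and `F(t) = η_γ(t) − t^γ/(1−γ)`, one has
`lim_{t→0⁺} t^{k−γ}·F^{(k)}(t) = 0` for `k = 0, 1, 2`. -/
theorem renyiEntropy_eff_lt_one {γ : ℝ} (hγ0 : 0 < γ) (hγ1 : γ < 1)
    (k : ℕ) (hk : k ≤ 2) :
    Filter.Tendsto
      (fun t : ℝ => t ^ ((k : ℝ) - γ)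
        * iteratedDeriv k (fun s : ℝ => renyiEntropy γ s - s ^ γ / (1 - γ)) t)
      (nhdsWithin 0 (Set.Ioi 0)) (nhds 0) := by
  change Tendsto (fun t => t ^ ((k : ℝ) - γ) * iteratedDeriv k (remainder γ) t) _ _
  have hIoo : Ioo (0 : ℝ) 1 ∈ 𝓝[>] 0 := Ioo_mem_nhdsGT (zero_lt_one' ℝ)
  interval_cases k
  · simpa using tendsto_rpow_neg_mul_remainder hγ0 hγ1
  · refine (tendsto_rpow_mul_remainderDeriv hγ0 hγ1).congr' ?_
    filter_upwards [hIoo] with t ht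
    rw [iteratedDeriv_one_remainder hγ1.ne ht, Nat.cast_one]
  · refine (tendsto_rpow_mul_remainderDeriv2 hγ0 hγ1).congr' ?_
    filter_upwards [hIoo] with t ht
    rw [iteratedDeriv_two_remainder hγ1.ne ht, Nat.cast_ofNat]
end

section
/- Let d ≥ 1 and m ≥ 1 be integers, let h : ℝ^d → ℝ be continuous, and let h_∞ : ℝ^d → ℝ be continuous, positively homogeneous of degree 2m (h_∞(s·ξ) = s^{2m}·h_∞(ξ) for all s > 0 and ξ ∈ ℝ^d), satisfy min_{|ξ|=1} h_∞(ξ) > 0, and suppose |ξ|^{−2m}·|h(ξ) − h_∞(ξ)| → 0 as |ξ| → ∞. Set ϱ(T,μ) := (2π)^{−d}·∫_{ℝ^d} (1 + exp((h(ξ) − μ)/T))^{−1} dξ and κ := (2π)^{−d}·∫_{ℝ^d} exp(−h_∞(ξ)) dξ. Fix ρ > 0 and let μ : (0,∞) → ℝ be any function such that ϱ(T, μ(T)) → ρ as T → ∞. Then exp(−μ(T)/T) · κ · T^{d/(2m)} / ρ → 1 as T → ∞; equivalently, exp(−μ(T)/T) = (κ·T^{d/(2m)}/ρ)·(1 + o(1))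 as T → ∞. -/
/-!
Write `z = exp (μ / T)` for the fugacity. Substituting `ξ = T ^ (1 / (2m)) • η` turns the density
into `ϱ(T, μ) = z T ^ (d / (2m)) (2π)⁻ᵈ ∫ (z + exp (h (T ^ (1 / (2m)) • η) / T))⁻¹ dη`.
Along `μ(T)` the fugacity tends to `0`: otherwise the Fermi symbol would stay bounded below on
balls of arbitrarily large radius, and the density could not stay bounded. Since
`h (T ^ (1 / (2m)) • η) / T → h_∞ η` and `h ξ ≥ (ν / 2) ‖ξ‖ ^ (2m) - C` with
`ν = min_{‖ξ‖ = 1} h_∞`, dominated convergence sends the last integral to `∫ exp (-h_∞)`,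
so `z T ^ (d / (2m)) → ρ / κ`.
-/

open MeasureTheory Real Filter Topology Module Metric

noncomputable def fermiDirac (T μ x : ℝ) : ℝ := (1 + exp ((x - μ) / T))⁻¹

lemma fermiDirac_pos (T μ x : ℝ) : 0 < fermiDirac T μ x := by
  unfold fermiDirac; positivity

lemma inv_add_exp_le_exp_neg {z : ℝ} (hz : 0 ≤ z) (y : ℝ) : (z + exp y)⁻¹ ≤ exp (-y) := by
  rw [exp_neg]
  exact inv_anti₀ (exp_pos y) (le_add_of_nonneg_left hz)

lemma fermiDirac_le_exp (T μ x : ℝ) : fermiDirac T μ x ≤ exp (-((x - μ) / T)) :=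
  inv_add_exp_le_exp_neg zero_le_one _

lemma fermiDirac_eq_mul_inv (T μ x : ℝ) :
    fermiDirac T μ x = exp (μ / T) * (exp (μ / T) + exp (x / T))⁻¹ := by
  rw [fermiDirac, sub_div, exp_sub]
  field_simp

lemma div_add_exp_one_le_fermiDirac {T μ x ε : ℝ} (hT : 0 < T) (hx : x ≤ T) (hε : 0 < ε)
    (hεμ : ε ≤ exp (μ / T)) : ε / (ε + exp 1) ≤ fermiDirac T μ x := by
  have hxT : exp (x / T) ≤ exp 1 := exp_le_exp.2 ((div_le_one hT).2 hx)
  rw [fermiDirac_eq_mul_inv, ← div_eq_mul_inv, div_le_div_iff₀ (by positivity) (by positivity)]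
  nlinarith [exp_pos (x / T)]

lemma exists_mul_norm_pow_sub_le {E : Type*} [NormedAddCommGroup E] [ProperSpace E] {h : E → ℝ}
    (hh : Continuous h) {k : ℕ} {b R : ℝ}
    (hR : ∀ x, R ≤ ‖x‖ → b * ‖x‖ ^ k ≤ h x) : ∃ C, 0 ≤ C ∧ ∀ x, b * ‖x‖ ^ k - C ≤ h x := by
  obtain ⟨B, hB⟩ := (isCompact_closedBall (0 : E) R).bddAbove_image
    (f := fun x => b * ‖x‖ ^ k - h x) (by fun_prop)
  refine ⟨max B 0, le_max_right _ _, fun x => ?_⟩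
  rcases le_total ‖x‖ R with hx | hx
  · have := hB ⟨x, mem_closedBall_zero_iff.2 hx, rfl⟩
    linarith [le_max_left B 0]
  · linarith [hR x hx, le_max_right B 0]

section Homogeneous

variable {E : Type*} [NormedAddCommGroup E] [NormedSpace ℝ E] {h g : E → ℝ} {k : ℕ}

lemma apply_zero_of_homogeneous (hk : k ≠ 0)
    (hg : ∀ s : ℝ, 0 < s → ∀ x, g (s • x) = s ^ k * g x) : g 0 = 0 := by
  have h2 := hg 2 two_pos 0
  rw [smul_zero] at h2
  have : (1 : ℝ) < 2 ^ k := one_lt_pow₀ one_lt_two hk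
  nlinarith

lemma mul_norm_pow_le_of_homogeneous (hk : k ≠ 0)
    (hg : ∀ s : ℝ, 0 < s → ∀ x, g (s • x) = s ^ k * g x) {ν : ℝ}
    (hν : ∀ x, ‖x‖ = 1 → ν ≤ g x) (x : E) : ν * ‖x‖ ^ k ≤ g x := by
  rcases eq_or_ne x 0 with rfl | hx
  · simp [apply_zero_of_homogeneous hk hg, hk]
  · have hx' : 0 < ‖x‖ := norm_pos_iff.2 hx
    have hgx := hg ‖x‖ hx' (‖x‖⁻¹ • x)
    rw [smul_smul, mul_inv_cancel₀ hx'.ne', one_smul] at hgx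
    rw [hgx, mul_comm]
    exact mul_le_mul_of_nonneg_left (hν _ (norm_smul_inv_norm hx)) (by positivity)

lemma exists_half_mul_norm_pow_sub_le [ProperSpace E] (hh : Continuous h) (hk : k ≠ 0)
    (hg : ∀ s : ℝ, 0 < s → ∀ x, g (s • x) = s ^ k * g x) {ν : ℝ} (hν₀ : 0 < ν)
    (hν : ∀ x, ‖x‖ = 1 → ν ≤ g x)
    (hasym : ∀ ε : ℝ, 0 < ε → ∃ R : ℝ, ∀ x, R ≤ ‖x‖ → |h x - g x| ≤ ε * ‖x‖ ^ k) :
    ∃ C, 0 ≤ C ∧ ∀ x, ν / 2 * ‖x‖ ^ k - C ≤ h x := by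
  obtain ⟨R, hR⟩ := hasym (ν / 2) (half_pos hν₀)
  exact exists_mul_norm_pow_sub_le hh fun x hx => by
    linarith [(abs_le.1 (hR x hx)).1, mul_norm_pow_le_of_homogeneous hk hg hν x]

lemma tendsto_apply_rpow_inv_smul_div (hk : k ≠ 0)
    (hg : ∀ s : ℝ, 0 < s → ∀ x, g (s • x) = s ^ k * g x)
    (hasym : ∀ ε : ℝ, 0 < ε → ∃ R : ℝ, ∀ x, R ≤ ‖x‖ → |h x - g x| ≤ ε * ‖x‖ ^ k) (x : E) :
    Tendsto (fun T : ℝ => h (T ^ (k⁻¹ : ℝ) • x) / T) atTop (𝓝 (g x)) := by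
  rcases eq_or_ne x 0 with rfl | hx
  · simpa [apply_zero_of_homogeneous hk hg] using tendsto_const_nhds.div_atTop tendsto_id
  have hx' : 0 < ‖x‖ := norm_pos_iff.2 hx
  have hscale : Tendsto (fun T : ℝ => T ^ (k⁻¹ : ℝ)) atTop atTop :=
    tendsto_rpow_atTop (by positivity)
  refine Metric.tendsto_nhds.2 fun ε hε => ?_
  obtain ⟨R, hR⟩ := hasym (ε / 2 / ‖x‖ ^ k) (by positivity)
  filter_upwards [hscale.eventually_ge_atTop (R / ‖x‖), eventually_gt_atTop 0] with T hRT hT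
  have hc : 0 < T ^ (k⁻¹ : ℝ) := rpow_pos_of_pos hT _
  have hck : (T ^ (k⁻¹ : ℝ)) ^ k = T := rpow_inv_natCast_pow hT.le hk
  have hnorm : ‖T ^ (k⁻¹ : ℝ) • x‖ = T ^ (k⁻¹ : ℝ) * ‖x‖ := by
    rw [norm_smul, norm_of_nonneg hc.le]
  have hbound := hR _ (by rw [hnorm]; exact (div_le_iff₀ hx').1 hRT)
  rw [hg _ hc, hck, hnorm, mul_pow, hck] at hbound
  rw [dist_eq, show h (T ^ (k⁻¹ : ℝ) • x) / T - g x = (h (T ^ (k⁻¹ : ℝ) • x) - T * g x) / T by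
    field_simp, abs_div, abs_of_pos hT, div_lt_iff₀ hT]
  calc _ ≤ ε / 2 / ‖x‖ ^ k * (T * ‖x‖ ^ k) := hbound
    _ = ε / 2 * T := by field_simp
    _ < ε * T := by linarith [mul_pos hε hT]

lemma mul_norm_pow_sub_le_apply_rpow_inv_smul_div (hk : k ≠ 0) {b C : ℝ} (hC₀ : 0 ≤ C)
    (hC : ∀ x, b * ‖x‖ ^ k - C ≤ h x) {T : ℝ} (hT : 1 ≤ T) (x : E) :
    b * ‖x‖ ^ k - C ≤ h (T ^ (k⁻¹ : ℝ) • x) / T := by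
  have hT₀ : 0 < T := one_pos.trans_le hT
  have hx := hC (T ^ (k⁻¹ : ℝ) • x)
  rw [norm_smul, norm_of_nonneg (rpow_nonneg hT₀.le _), mul_pow,
    rpow_inv_natCast_pow hT₀.le hk] at hx
  rw [le_div_iff₀ hT₀]
  nlinarith [pow_nonneg (norm_nonneg x) k]

end Homogeneous

section Integral

variable {E : Type*} [NormedAddCommGroup E] [NormedSpace ℝ E] [FiniteDimensional ℝ E]
  [MeasureSpace E] [BorelSpace E] [(volume : Measure E).IsAddHaarMeasure]

lemma integral_fermiDirac_eq_rpow_mul (h : E → ℝ) (k : ℕ) {T : ℝ} (hT : 0 < T) (μ : ℝ) :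
    ∫ x, fermiDirac T μ (h x) = exp (μ / T) * T ^ ((finrank ℝ E : ℝ) / k) *
      ∫ y, (exp (μ / T) + exp (h (T ^ (k⁻¹ : ℝ) • y) / T))⁻¹ := by
  have hc : 0 < T ^ (k⁻¹ : ℝ) := rpow_pos_of_pos hT _
  have hcn : (T ^ (k⁻¹ : ℝ)) ^ finrank ℝ E = T ^ ((finrank ℝ E : ℝ) / k) := by
    rw [← rpow_natCast, ← rpow_mul hT.le, inv_mul_eq_div]
  rw [Measure.integral_comp_smul_of_nonneg (μ := volume) (hR := hc.le)
    (f := fun x => (exp (μ / T) + exp (h x / T))⁻¹), smul_eq_mul, hcn, ← mul_assoc,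
    mul_assoc _ _ (_⁻¹), mul_inv_cancel₀ (rpow_pos_of_pos hT _).ne', mul_one,
    ← integral_const_mul]
  simp_rw [fermiDirac_eq_mul_inv]

variable [Nontrivial E] {a C : ℝ} {k : ℕ}

lemma integrable_exp_neg_mul_norm_pow (ha : 0 < a) (hk : k ≠ 0) :
    Integrable fun x : E => exp (-(a * ‖x‖ ^ k)) := by
  refine (integrable_fun_norm_addHaar volume (f := fun y => exp (-(a * y ^ k)))).2 ?_
  have hs : (-1 : ℝ) < (finrank ℝ E - 1 : ℕ) := by
    linarith [(Nat.cast_nonneg _ : (0 : ℝ) ≤ (finrank ℝ E - 1 : ℕ))]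
  refine (integrableOn_rpow_mul_exp_neg_mul_rpow hs (p := k) (by positivity) ha).congr_fun
    (fun y (hy : 0 < y) => ?_) measurableSet_Ioi
  simp [rpow_natCast, smul_eq_mul]

lemma integrable_exp_neg_of_le {f : E → ℝ} (hf : Continuous f) (ha : 0 < a) (hk : k ≠ 0)
    (hC : ∀ x, a * ‖x‖ ^ k - C ≤ f x) : Integrable fun x => exp (-f x) := by
  refine ((integrable_exp_neg_mul_norm_pow ha hk).const_mul (exp C)).mono' (by fun_prop)
    (.of_forall fun x => ?_)
  rw [norm_of_nonneg (exp_pos _).le, ← exp_add]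
  exact exp_le_exp.2 (by linarith [hC x])

lemma integrable_fermiDirac {h : E → ℝ} (hh : Continuous h) (ha : 0 < a) (hk : k ≠ 0)
    (hC : ∀ x, a * ‖x‖ ^ k - C ≤ h x) {T : ℝ} (hT : 0 < T) (μ : ℝ) :
    Integrable fun x => fermiDirac T μ (h x) := by
  have hbound : ∀ x, a / T * ‖x‖ ^ k - (C + μ) / T ≤ (h x - μ) / T := fun x => by
    rw [div_mul_eq_mul_div, ← sub_div]
    exact div_le_div_of_nonneg_right (by linarith [hC x]) hT.le
  refine (integrable_exp_neg_of_le (by fun_prop) (div_pos ha hT) hk hbound).mono'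
    (by unfold fermiDirac; fun_prop) (.of_forall fun x => ?_)
  rw [norm_of_nonneg (fermiDirac_pos _ _ _).le]
  exact fermiDirac_le_exp _ _ _

lemma tendsto_exp_div_zero_of_integral_fermiDirac_le {h : E → ℝ} (hh : Continuous h)
    (ha : 0 < a) (hk : k ≠ 0) (hC : ∀ x, a * ‖x‖ ^ k - C ≤ h x) {μ : ℝ → ℝ} {M : ℝ}
    (hM : ∀ᶠ T in atTop, ∫ x, fermiDirac T (μ T) (h x) ≤ M) :
    Tendsto (fun T => exp (μ T / T)) atTop (𝓝 0) := by
  refine tendsto_order.2 ⟨fun b hb => .of_forall fun T => hb.trans (exp_pos _),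
    fun ε hε => ?_⟩
  have hw : 0 < ε / (ε + exp 1) := by positivity
  have hball : Tendsto (fun r : ℝ => r ^ finrank ℝ E * volume.real (ball (0 : E) 1)) atTop
      atTop := (tendsto_pow_atTop finrank_pos.ne').atTop_mul_const
    (ENNReal.toReal_pos (measure_ball_pos _ _ one_pos).ne' measure_ball_lt_top.ne)
  obtain ⟨r, hr0, hrM⟩ := ((eventually_ge_atTop 0).and
    (hball.eventually_gt_atTop (M / (ε / (ε + exp 1))))).exists
  rw [div_lt_iff₀ hw, ← Measure.addHaar_real_closedBall _ _ hr0] at hrM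
  obtain ⟨B, hB⟩ := (isCompact_closedBall (0 : E) r).bddAbove_image hh.continuousOn
  filter_upwards [hM, eventually_ge_atTop (max B 1)] with T hTM hT
  have hT0 : 0 < T := one_pos.trans_le ((le_max_right _ _).trans hT)
  by_contra! hεμ
  have hlower : ∀ x ∈ closedBall (0 : E) r, ε / (ε + exp 1) ≤ fermiDirac T (μ T) (h x) :=
    fun x hx => div_add_exp_one_le_fermiDirac hT0
      ((hB ⟨x, hx, rfl⟩).trans ((le_max_left _ _).trans hT)) hε hεμ
  have hint := integrable_fermiDirac hh ha hk hC hT0 (μ T)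
  have := (setIntegral_ge_of_const_le measurableSet_closedBall measure_closedBall_lt_top.ne
    hlower hint.integrableOn).trans
    (setIntegral_le_integral hint (.of_forall fun x => (fermiDirac_pos _ _ _).le))
  rw [smul_eq_mul] at this
  exact (hrM.trans_le this).not_ge hTM

lemma tendsto_integral_inv_add_exp {ι : Type*} {l : Filter ι} [l.IsCountablyGenerated]
    {z : ι → ℝ} {f : ι → E → ℝ} {g : E → ℝ} (hz : Tendsto z l (𝓝 0)) (hz₀ : ∀ i, 0 ≤ z i)
    (hf : ∀ᶠ i in l, Continuous (f i)) (ha : 0 < a) (hk : k ≠ 0)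
    (hC : ∀ᶠ i in l, ∀ x, a * ‖x‖ ^ k - C ≤ f i x) (hfg : ∀ x, Tendsto (f · x) l (𝓝 (g x))) :
    Tendsto (fun i => ∫ x, (z i + exp (f i x))⁻¹) l (𝓝 (∫ x, exp (-g x))) := by
  refine tendsto_integral_filter_of_dominated_convergence (fun x => exp (-(a * ‖x‖ ^ k - C)))
    ?_ ?_ (integrable_exp_neg_of_le (by fun_prop) ha hk (C := C) fun _ => le_rfl) ?_
  · filter_upwards [hf] with i hfi
    exact (continuous_const.add (continuous_exp.comp hfi)).inv₀
      (fun x => (add_pos_of_nonneg_of_pos (hz₀ i) (exp_pos _)).ne') |>.aestronglyMeasurable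
  · filter_upwards [hC] with i hCi
    refine .of_forall fun x => ?_
    rw [norm_of_nonneg (inv_nonneg.2 (add_nonneg (hz₀ i) (exp_pos _).le))]
    exact (inv_add_exp_le_exp_neg (hz₀ i) _).trans (exp_le_exp.2 (neg_le_neg (hCi x)))
  · refine .of_forall fun x => ?_
    simpa [exp_neg] using (hz.add ((continuous_exp.tendsto _).comp (hfg x))).inv₀
      (by simp [(exp_pos (g x)).ne'])

end Integral

lemma tendsto_div_mul_of_tendsto_mul {α : Type*} {l : Filter α} {u v : α → ℝ} {ρ κ : ℝ}
    (hρ : ρ ≠ 0) (hκ : κ ≠ 0) (huv : Tendsto (fun x => u x * v x) l (𝓝 ρ))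
    (hv : Tendsto v l (𝓝 κ)) : Tendsto (fun x => ρ / (κ * u x)) l (𝓝 1) := by
  have hu : Tendsto u l (𝓝 (ρ / κ)) := (huv.div hv hκ).congr' <| by
    filter_upwards [hv.eventually_ne hκ] with x hx
    exact mul_div_cancel_right₀ _ hx
  have := tendsto_const_nhds (x := ρ).div (tendsto_const_nhds (x := κ).mul hu)
    (by simp [mul_div_cancel₀ _ hκ, hρ])
  rwa [mul_div_cancel₀ _ hκ, div_self hρ] at this

/-- Fixed-density high-temperature behavior of the chemical potential.
Let `h, h_∞ : ℝ^d → ℝ` be continuous (`d ≥ 1`), with `h_∞` positively homogeneous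
of degree `2m` (`m ≥ 1`), `min_{|ξ|=1} h_∞(ξ) > 0`, and
`|ξ|^{−2m}·|h(ξ) − h_∞(ξ)| → 0` as `|ξ| → ∞`. Set
`ϱ(T,μ) = (2π)^{−d}·∫ (1 + exp((h(ξ)−μ)/T))⁻¹ dξ` and
`κ = (2π)^{−d}·∫ exp(−h_∞(ξ)) dξ`. If `ρ > 0` and `μ : (0,∞) → ℝ` satisfies
`ϱ(T, μ(T)) → ρ` as `T → ∞`, then
`exp(−μ(T)/T) = (κ·T^{d/(2m)}/ρ)·(1 + o(1))`, i.e.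
`exp(−μ(T)/T) / (κ·T^{d/(2m)}/ρ) → 1` as `T → ∞`. -/
theorem fugacity_asymptotics_fixed_density {d m : ℕ} (hd : 1 ≤ d) (hm : 1 ≤ m)
    (h hLim : EuclideanSpace ℝ (Fin d) → ℝ)
    (hcont : Continuous h) (hcontLim : Continuous hLim)
    (hhom : ∀ s : ℝ, 0 < s → ∀ ξ : EuclideanSpace ℝ (Fin d),
      hLim (s • ξ) = s ^ (2 * m) * hLim ξ)
    (hpos : ∃ ν : ℝ, 0 < ν ∧ ∀ ξ : EuclideanSpace ℝ (Fin d), ‖ξ‖ = 1 → ν ≤ hLim ξ)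
    (hasym : ∀ ε : ℝ, 0 < ε → ∃ R : ℝ, ∀ ξ : EuclideanSpace ℝ (Fin d),
      R ≤ ‖ξ‖ → |h ξ - hLim ξ| ≤ ε * ‖ξ‖ ^ (2 * m))
    (ρ : ℝ) (hρ : 0 < ρ) (μ : ℝ → ℝ)
    (hμ : Filter.Tendsto
      (fun T : ℝ => ((2 * Real.pi) ^ d)⁻¹ *
        ∫ ξ : EuclideanSpace ℝ (Fin d), (1 + Real.exp ((h ξ - μ T) / T))⁻¹)
      Filter.atTop (nhds ρ)) :
    Filter.Tendsto
      (fun T : ℝ => Real.exp (-(μ T) / T) /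
        ((((2 * Real.pi) ^ d)⁻¹ *
            ∫ ξ : EuclideanSpace ℝ (Fin d), Real.exp (-(hLim ξ)))
          * T ^ ((d : ℝ) / (2 * m)) / ρ))
      Filter.atTop (nhds 1) := by
  obtain ⟨ν, hν, hνle⟩ := hpos
  have : Nontrivial (EuclideanSpace ℝ (Fin d)) :=
    Module.nontrivial_of_finrank_pos (R := ℝ) (by rw [finrank_euclideanSpace_fin]; omega)
  have hk : 2 * m ≠ 0 := by omega
  obtain ⟨C, hC₀, hC⟩ := exists_half_mul_norm_pow_sub_le hcont hk hhom hν hνle hasym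
  have hP : 0 < ((2 * π) ^ d)⁻¹ := by positivity
  have hz := tendsto_exp_div_zero_of_integral_fermiDirac_le hcont (half_pos hν) hk hC
    (M := (ρ + 1) / ((2 * π) ^ d)⁻¹) <| (hμ.eventually_le_const (lt_add_one ρ)).mono
      fun T hT => (le_div_iff₀' hP).2 hT
  have hG := tendsto_integral_inv_add_exp hz (fun _ => (exp_pos _).le)
    (.of_forall fun T => by fun_prop) (half_pos hν) hk
    ((eventually_ge_atTop 1).mono fun T hT =>
      mul_norm_pow_sub_le_apply_rpow_inv_smul_div hk hC₀ hC hT)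
    (tendsto_apply_rpow_inv_smul_div hk hhom hasym)
  have hκ := integral_exp_pos (integrable_exp_neg_of_le hcontLim hν hk (C := 0)
    (by simpa using mul_norm_pow_le_of_homogeneous hk hhom hνle))
  refine (tendsto_div_mul_of_tendsto_mul (u := fun T => exp (μ T / T) * T ^ ((d : ℝ) / (2 * m)))
    hρ.ne' (mul_pos hP hκ).ne' (hμ.congr' ?_) (hG.const_mul _)).congr' ?_
  all_goals filter_upwards [eventually_gt_atTop 0] with T hT
  · change _ * ∫ ξ, fermiDirac T (μ T) (h ξ) = _
    rw [integral_fermiDirac_eq_rpow_mul _ (2 * m) hT, finrank_euclideanSpace_fin]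
    push_cast
    ring
  · have := rpow_pos_of_pos hT ((d : ℝ) / (2 * m))
    rw [neg_div, exp_neg]
    field_simp
end
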